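/- arXiv:1109.0231 — 7 statements merged into one kernel-verified Lean document; each statement's English description precedes it below -/
import Mathlib

section
/- Fuglede's theorem: if N is a bounded normal operator on a Hilbert space and T is a bounded operator with T N = N T, then T N* = N* T. Consequently the commutant of a normal operator is a self-adjoint algebra. -/
open ContinuousLinearMap

/-- Fuglede's theorem: if `N` is normal and `T N = N T`, then `T N* = N* T`; consequently
the commutant of `N` is self-adjoint (`T*` also commutes with `N`). -/
theorem stmt_3 {H : Type*} [NormedAddCommGroup H] [InnerProductSpace ℂ H] [CompleteSpace H]
    (N T : H →L[ℂ] H)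
    (hN : N ∘L ContinuousLinearMap.adjoint N = ContinuousLinearMap.adjoint N ∘L N)
    (hTN : T ∘L N = N ∘L T) :
    T ∘L ContinuousLinearMap.adjoint N = ContinuousLinearMap.adjoint N ∘L T ∧
      ContinuousLinearMap.adjoint T ∘L N = N ∘L ContinuousLinearMap.adjoint T := by
  simp only [← star_eq_adjoint, ← mul_def] at hN hTN ⊢
  have hnormal : IsStarNormal N := ⟨hN.symm⟩
  have hcomm : Commute T (star N) := hnormal.commute_star_right hTN
  exact ⟨hcomm.eq, by simpa only [star_star] using hcomm.star_star.eq⟩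
end

section
/- Fuglede–Putnam theorem: if M and N are bounded normal operators on Hilbert spaces H and K respectively, and T : K → H is a bounded operator satisfying M T = T N, then M* T = T N*. -/
/-!
Inside a single C⋆-algebra the theorem is `SemiconjBy.star_right` (Rosenblum's Liouville
argument). Berberian's trick reduces to that case: embed `H` and `K` isometrically into
`E = H ⊕ K` by `u` and `v`, and replace every operator `A : G → F` by `u_F A v_G* : E → E`.
Compositions, adjoints and normality are preserved, and `A` is recovered as `u_F* (u_F A v_G*) v_G`.
-/

open ContinuousLinearMap

namespace WithLp

section Embeddings

variable (p : ENNReal) (𝕜 E F : Type*) [Semiring 𝕜] [TopologicalSpace E] [TopologicalSpace F]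
  [AddCommGroup E] [AddCommGroup F] [Module 𝕜 E] [Module 𝕜 F]

noncomputable def inlL : E →L[𝕜] WithLp p (E × F) :=
  (prodContinuousLinearEquiv p 𝕜 E F).symm ∘L .inl 𝕜 E F

noncomputable def inrL : F →L[𝕜] WithLp p (E × F) :=
  (prodContinuousLinearEquiv p 𝕜 E F).symm ∘L .inr 𝕜 E F

@[simp]
theorem fstL_comp_inlL : fstL p 𝕜 E F ∘L inlL p 𝕜 E F = .id 𝕜 E := by
  ext; simp [inlL]

@[simp]
theorem sndL_comp_inrL : sndL p 𝕜 E F ∘L inrL p 𝕜 E F = .id 𝕜 F := by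
  ext; simp [inrL]

end Embeddings

variable {𝕜 E F : Type*} [RCLike 𝕜]
  [NormedAddCommGroup E] [InnerProductSpace 𝕜 E] [CompleteSpace E]
  [NormedAddCommGroup F] [InnerProductSpace 𝕜 F] [CompleteSpace F]

@[simp]
theorem adjoint_inlL : adjoint (inlL 2 𝕜 E F) = fstL 2 𝕜 E F :=
  .symm <| (eq_adjoint_iff _ _).2 fun x y => by simp [inlL]

@[simp]
theorem adjoint_inrL : adjoint (inrL 2 𝕜 E F) = sndL 2 𝕜 E F :=
  .symm <| (eq_adjoint_iff _ _).2 fun x y => by simp [inrL]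

end WithLp

namespace ContinuousLinearMap

variable {𝕜 E F G H : Type*} [RCLike 𝕜]
  [NormedAddCommGroup E] [InnerProductSpace 𝕜 E] [CompleteSpace E]
  [NormedAddCommGroup F] [InnerProductSpace 𝕜 F]
  [NormedAddCommGroup G] [InnerProductSpace 𝕜 G] [CompleteSpace G]
  [NormedAddCommGroup H] [InnerProductSpace 𝕜 H] [CompleteSpace H]
  {u : F →L[𝕜] E} {v : G →L[𝕜] E} {w : H →L[𝕜] E}

noncomputable def corner (u : F →L[𝕜] E) (v : G →L[𝕜] E) (A : G →L[𝕜] F) : E →L[𝕜] E :=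
  u ∘L A ∘L adjoint v

theorem adjoint_corner [CompleteSpace F] (A : G →L[𝕜] F) :
    adjoint (corner u v A) = corner v u (adjoint A) := by
  simp only [corner, adjoint_comp, adjoint_adjoint, comp_assoc]

theorem corner_comp_corner (hv : adjoint v ∘L v = .id 𝕜 G) (A : G →L[𝕜] F) (B : H →L[𝕜] G) :
    corner u v A ∘L corner v w B = corner u w (A ∘L B) := by
  simp only [corner, comp_assoc]
  rw [← comp_assoc (adjoint v) v, hv, id_comp]

theorem corner_injective [CompleteSpace F] (hu : adjoint u ∘L u = .id 𝕜 F)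
    (hv : adjoint v ∘L v = .id 𝕜 G) : Function.Injective (corner u v) := by
  have recover (A : G →L[𝕜] F) : adjoint u ∘L corner u v A ∘L v = A := by
    simp only [corner, comp_assoc, hv, comp_id]
    rw [← comp_assoc, hu, id_comp]
  exact fun A B hAB => by rw [← recover A, hAB, recover B]

theorem isStarNormal_corner [CompleteSpace F] (hu : adjoint u ∘L u = .id 𝕜 F) {A : F →L[𝕜] F}
    (hA : A ∘L adjoint A = adjoint A ∘L A) : IsStarNormal (corner u u A) := by
  rw [isStarNormal_iff, commute_iff_eq, star_eq_adjoint, adjoint_corner, mul_def, mul_def,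
    corner_comp_corner hu, corner_comp_corner hu, hA]

end ContinuousLinearMap

/-- Fuglede–Putnam theorem: if `M`, `N` are normal and `M T = T N`, then `M* T = T N*`. -/
theorem stmt_4 {H K : Type*}
    [NormedAddCommGroup H] [InnerProductSpace ℂ H] [CompleteSpace H]
    [NormedAddCommGroup K] [InnerProductSpace ℂ K] [CompleteSpace K]
    (M : H →L[ℂ] H) (N : K →L[ℂ] K) (T : K →L[ℂ] H)
    (hM : M ∘L ContinuousLinearMap.adjoint M = ContinuousLinearMap.adjoint M ∘L M)
    (hN : N ∘L ContinuousLinearMap.adjoint N = ContinuousLinearMap.adjoint N ∘L N)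
    (hMTN : M ∘L T = T ∘L N) :
    ContinuousLinearMap.adjoint M ∘L T = T ∘L ContinuousLinearMap.adjoint N := by
  set u := WithLp.inlL 2 ℂ H K
  set v := WithLp.inrL 2 ℂ H K
  have hu : adjoint u ∘L u = .id ℂ H := by simp [u]
  have hv : adjoint v ∘L v = .id ℂ K := by simp [v]
  have intertwined : SemiconjBy (corner u v T) (corner v v N) (corner u u M) := by
    rw [SemiconjBy, mul_def, mul_def, corner_comp_corner hv, corner_comp_corner hu, hMTN]
  have starIntertwined :=
    intertwined.star_right (isStarNormal_corner hv hN) (isStarNormal_corner hu hM)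
  rw [SemiconjBy, star_eq_adjoint, star_eq_adjoint, adjoint_corner, adjoint_corner, mul_def,
    mul_def, corner_comp_corner hv, corner_comp_corner hu] at starIntertwined
  exact corner_injective hu hv starIntertwined.symm
end

section
/- Let S₁, …, Sₙ be isometries on a Hilbert space H with pairwise orthogonal ranges such that Σᵢ Sᵢ Sᵢ* = I (a Cuntz family). If a bounded operator B commutes with every Sᵢ, then B* also commutes with every Sᵢ; hence the commutant of {S₁, …, Sₙ} is a self-adjoint algebra. -/
open ContinuousLinearMap

/-- If `S₁, …, Sₙ` is a Cuntz family of isometries with pairwise orthogonal ranges summing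
to the identity, and `B` commutes with every `Sᵢ`, then `B*` commutes with every `Sᵢ`;
hence the commutant of the family is self-adjoint. -/
theorem stmt_5 {H : Type*} [NormedAddCommGroup H] [InnerProductSpace ℂ H] [CompleteSpace H]
    {n : ℕ} (S : Fin n → (H →L[ℂ] H))
    (horth : ∀ i j, ContinuousLinearMap.adjoint (S i) ∘L S j = if i = j then 1 else 0)
    (hcuntz : ∑ i, S i ∘L ContinuousLinearMap.adjoint (S i) = 1)
    (B : H →L[ℂ] H) (hB : ∀ i, B ∘L S i = S i ∘L B) :
    ∀ i, ContinuousLinearMap.adjoint B ∘L S i = S i ∘L ContinuousLinearMap.adjoint B := by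
  have hadj : ∀ j, ContinuousLinearMap.adjoint (S j) ∘L ContinuousLinearMap.adjoint B
      = ContinuousLinearMap.adjoint B ∘L ContinuousLinearMap.adjoint (S j) := by
    intro j
    rw [← adjoint_comp, ← adjoint_comp, hB]
  intro i
  calc ContinuousLinearMap.adjoint B ∘L S i
      = (∑ j, S j ∘L ContinuousLinearMap.adjoint (S j)) ∘L
        (ContinuousLinearMap.adjoint B ∘L S i) := by rw [hcuntz, ContinuousLinearMap.one_def, ContinuousLinearMap.id_comp]
    _ = ∑ j, S j ∘L ((ContinuousLinearMap.adjoint (S j) ∘L ContinuousLinearMap.adjoint B) ∘L S i) := by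
        rw [finset_sum_comp]; simp [comp_assoc]
    _ = ∑ j, S j ∘L (ContinuousLinearMap.adjoint B ∘L (ContinuousLinearMap.adjoint (S j) ∘L S i)) := by
        simp_rw [hadj, comp_assoc]
    _ = ∑ j, S j ∘L (ContinuousLinearMap.adjoint B ∘L (if j = i then 1 else 0)) := by
        simp_rw [horth]
    _ = S i ∘L ContinuousLinearMap.adjoint B := by
        simp only [apply_ite (fun x => ContinuousLinearMap.adjoint B ∘L x),
          apply_ite (fun x => S _ ∘L x), ContinuousLinearMap.comp_zero]
        rw [Fintype.sum_eq_single i]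
        · simp [ContinuousLinearMap.one_def]
        · intro x hx; simp [hx]
end

section
/- Sz.-Nagy dilation (coextension form): every contraction T on a Hilbert space H admits an isometric coextension; that is, there is a Hilbert space K containing H (via an isometric embedding J) and an isometry V on K such that H is coinvariant for V and the compression of V to H equals T: J* V J = T, and moreover J* Vⁿ J = Tⁿ for all n ≥ 0. -/
/-!
With the defect operator `D = √(1 - T* T)` one has `‖T x‖² + ‖D x‖² = ‖x‖²`, so the map
`V (f₀, f₁, f₂, …) = (T f₀, D f₀, f₁, f₂, …)` is an isometry of `ℓ²(ℕ, H)`. Embedding `H` as the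
0-th coordinate, `⟪J x, V g⟫ = ⟪x, T g₀⟫` gives `V* J = J T*`; taking adjoints, `J* V = T J*`,
hence `J* Vⁿ = Tⁿ J*` and `J* Vⁿ J = Tⁿ J* J = Tⁿ`.
-/

open ContinuousLinearMap

universe u

local notation "ℓ²(" E ")" => lp (fun _ : ℕ => E) 2

section Defect

variable {H : Type*} [NormedAddCommGroup H] [InnerProductSpace ℂ H] [CompleteSpace H]

lemma one_sub_adjoint_mul_self_nonneg {T : H →L[ℂ] H} (hT : ‖T‖ ≤ 1) :
    0 ≤ 1 - adjoint T * T := by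
  have hsq : ‖T‖ ^ 2 ≤ 1 := pow_le_one₀ (norm_nonneg T) hT
  rw [sub_nonneg, ← star_eq_adjoint]
  calc star T * T ≤ algebraMap ℝ _ (‖T‖ ^ 2) := CStarAlgebra.star_mul_le_algebraMap_norm_sq
    _ ≤ algebraMap ℝ _ 1 := algebraMap_mono _ hsq
    _ = 1 := map_one _

lemma norm_sq_add_norm_sq_sqrt_defect {T : H →L[ℂ] H} (hT : ‖T‖ ≤ 1) (x : H) :
    ‖T x‖ ^ 2 + ‖CFC.sqrt (1 - adjoint T * T) x‖ ^ 2 = ‖x‖ ^ 2 := by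
  set D := CFC.sqrt (1 - adjoint T * T)
  have hD : adjoint D ∘L D = 1 - adjoint T * T := by
    rw [← star_eq_adjoint, (CFC.sqrt_nonneg _).isSelfAdjoint.star_eq]
    exact CFC.sqrt_mul_sqrt_self _ (one_sub_adjoint_mul_self_nonneg hT)
  rw [apply_norm_sq_eq_inner_adjoint_left D, hD, apply_norm_sq_eq_inner_adjoint_left T]
  simp [inner_sub_left, ← Complex.ofReal_pow]

end Defect

section Coextension

variable {𝕜 E : Type*} [RCLike 𝕜] [NormedAddCommGroup E] [InnerProductSpace 𝕜 E]

def coextensionSeq (T D : E →L[𝕜] E) (f : ℕ → E) : ℕ → E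
  | 0 => T (f 0)
  | 1 => D (f 0)
  | n + 2 => f (n + 1)

lemma memℓp_coextensionSeq (T D : E →L[𝕜] E) (f : ℓ²(E)) :
    Memℓp (coextensionSeq T D f) 2 := by
  have hf := (lp.memℓp f).summable (by norm_num : (0 : ℝ) < (2 : ENNReal).toReal)
  exact memℓp_gen ((summable_nat_add_iff 2).mp ((summable_nat_add_iff 1).mpr hf))

def coextensionₗ (T D : E →L[𝕜] E) : ℓ²(E) →ₗ[𝕜] ℓ²(E) where
  toFun f := ⟨coextensionSeq T D f, memℓp_coextensionSeq T D f⟩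
  map_add' f g := by
    ext (_ | _ | n) <;> simp [coextensionSeq] <;> rfl
  map_smul' c f := by
    ext (_ | _ | n) <;> simp [coextensionSeq]

@[simp]
lemma coextensionₗ_apply (T D : E →L[𝕜] E) (f : ℓ²(E)) (n : ℕ) :
    coextensionₗ T D f n = coextensionSeq T D f n := rfl

lemma norm_coextensionₗ {T D : E →L[𝕜] E} (hTD : ∀ x, ‖T x‖ ^ 2 + ‖D x‖ ^ 2 = ‖x‖ ^ 2)
    (f : ℓ²(E)) : ‖coextensionₗ T D f‖ = ‖f‖ := by
  have hasSum_sq (g : ℓ²(E)) : HasSum (fun n => ‖g n‖ ^ 2) (‖g‖ ^ 2) := by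
    simpa using lp.hasSum_norm (p := 2) (by norm_num) g
  have htail : HasSum (fun n => ‖coextensionₗ T D f (n + 2)‖ ^ 2) (‖f‖ ^ 2 - ‖f 0‖ ^ 2) := by
    have := (hasSum_nat_add_iff' 1).mpr (hasSum_sq f)
    rwa [Finset.sum_range_one] at this
  have hV := (hasSum_nat_add_iff (f := fun n => ‖coextensionₗ T D f n‖ ^ 2) 2).mp htail
  simp only [Finset.sum_range_succ, Finset.sum_range_zero, coextensionₗ_apply, coextensionSeq,
    zero_add, hTD, sub_add_cancel] at hV
  exact (pow_left_inj₀ (norm_nonneg _) (norm_nonneg _) two_ne_zero).mp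
    ((hasSum_sq _).unique hV)

def coextension {T D : E →L[𝕜] E} (hTD : ∀ x, ‖T x‖ ^ 2 + ‖D x‖ ^ 2 = ‖x‖ ^ 2) :
    ℓ²(E) →ₗᵢ[𝕜] ℓ²(E) :=
  ⟨coextensionₗ T D, norm_coextensionₗ hTD⟩

lemma adjoint_coextension_comp_single [CompleteSpace E] {T D : E →L[𝕜] E}
    (hTD : ∀ x, ‖T x‖ ^ 2 + ‖D x‖ ^ 2 = ‖x‖ ^ 2) :
    adjoint (coextension hTD).toContinuousLinearMap ∘L
        lp.singleContinuousLinearMap 𝕜 (fun _ => E) 2 0 =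
      lp.singleContinuousLinearMap 𝕜 (fun _ => E) 2 0 ∘L adjoint T := by
  ext x : 1
  refine ext_inner_right 𝕜 fun g => ?_
  simp [adjoint_inner_left, lp.inner_single_left, coextension, coextensionSeq]

end Coextension

section PowerDilation

lemma comp_pow_eq_pow_comp {𝕜 E F : Type*} [NontriviallyNormedField 𝕜]
    [NormedAddCommGroup E] [NormedSpace 𝕜 E] [NormedAddCommGroup F] [NormedSpace 𝕜 F]
    {A : F →L[𝕜] E} {V : F →L[𝕜] F} {T : E →L[𝕜] E}
    (h : A ∘L V = T ∘L A) (n : ℕ) : A ∘L (V ^ n) = (T ^ n) ∘L A := by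
  induction n with
  | zero => simp [one_def]
  | succ n ih =>
    rw [pow_succ, pow_succ, mul_def, mul_def, ← comp_assoc, ih, comp_assoc, h, comp_assoc]

variable {𝕜 E F : Type*} [RCLike 𝕜]
  [NormedAddCommGroup E] [InnerProductSpace 𝕜 E] [CompleteSpace E]
  [NormedAddCommGroup F] [InnerProductSpace 𝕜 F] [CompleteSpace F]

lemma adjoint_comp_pow_comp_eq_pow {J : E →L[𝕜] F} {V : F →L[𝕜] F} {T : E →L[𝕜] E}
    (hJ : ∀ x, ‖J x‖ = ‖x‖) (hV : adjoint V ∘L J = J ∘L adjoint T) (n : ℕ) :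
    adjoint J ∘L (V ^ n) ∘L J = T ^ n := by
  have hJV : adjoint J ∘L V = T ∘L adjoint J := by
    simpa using congrArg adjoint hV
  rw [← comp_assoc, comp_pow_eq_pow_comp hJV, comp_assoc,
    (norm_map_iff_adjoint_comp_self J).mp hJ]
  exact comp_id _

end PowerDilation

/-- Sz.-Nagy dilation (coextension form): every contraction `T` on a Hilbert space `H`
admits an isometric coextension `V` on a larger Hilbert space `K` (with isometric embedding
`J`), i.e. `H` is coinvariant (`V* J = J T*`) and `J* Vⁿ J = Tⁿ` for all `n ≥ 0`. -/
theorem stmt_12 {H : Type u} [NormedAddCommGroup H] [InnerProductSpace ℂ H] [CompleteSpace H]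
    (T : H →L[ℂ] H) (hT : ‖T‖ ≤ 1) :
    ∃ (K : Type u) (_ : NormedAddCommGroup K) (_ : InnerProductSpace ℂ K)
      (_ : CompleteSpace K) (J : H →L[ℂ] K) (V : K →L[ℂ] K),
      (∀ x : H, ‖J x‖ = ‖x‖) ∧ (∀ y : K, ‖V y‖ = ‖y‖) ∧
      ContinuousLinearMap.adjoint V ∘L J = J ∘L ContinuousLinearMap.adjoint T ∧
      ∀ n : ℕ, ContinuousLinearMap.adjoint J ∘L (V ^ n) ∘L J = T ^ n := by
  have hTD := norm_sq_add_norm_sq_sqrt_defect hT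
  have hJ : ∀ x : H, ‖lp.singleContinuousLinearMap ℂ (fun _ : ℕ => H) 2 0 x‖ = ‖x‖ :=
    lp.norm_single (E := fun _ : ℕ => H) (p := 2) (by norm_num) 0
  have hco := adjoint_coextension_comp_single hTD
  refine ⟨ℓ²(H), inferInstance, inferInstance, inferInstance, _, _, hJ, ?_, hco, ?_⟩
  · exact (coextension hTD).norm_map
  · exact adjoint_comp_pow_comp_eq_pow hJ hco
end

section
/- Every isometry V on a Hilbert space H extends to a unitary: there exist a Hilbert space K, an isometric embedding J : H → K with H identified as an invariant subspace, and a unitary U on K such that U J = J V. -/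
open ContinuousLinearMap

universe u

/-!
For an isometry `V`, `P = 1 - V V†` is the orthogonal projection onto `(range V)ᗮ`, so
`V† P = 0` and `P V = 0`. Halmos' block operator `U = !![V, P; 0, V†]` on `H ⊕ H` is then
isometric, because `range V ⟂ range P` and `‖P y‖² + ‖V† y‖² = ‖P y‖² + ‖V V† y‖² = ‖y‖²`;
it has the right inverse `!![V†, 0; P, V]`, and it restricts to `V` on `H ⊕ 0`.
-/

noncomputable section

open scoped InnerProductSpace

namespace ContinuousLinearMap

section blockOp

variable {𝕜 E F E' F' : Type*} [RCLike 𝕜]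
  [NormedAddCommGroup E] [NormedAddCommGroup F] [NormedAddCommGroup E'] [NormedAddCommGroup F']
  [NormedSpace 𝕜 E] [NormedSpace 𝕜 F] [NormedSpace 𝕜 E'] [NormedSpace 𝕜 F']

def blockOp (A : E →L[𝕜] E') (B : F →L[𝕜] E') (C : E →L[𝕜] F') (D : F →L[𝕜] F') :
    WithLp 2 (E × F) →L[𝕜] WithLp 2 (E' × F') :=
  (WithLp.prodContinuousLinearEquiv 2 𝕜 E' F').symm.toContinuousLinearMap ∘L
    (A ∘L fst 𝕜 E F + B ∘L snd 𝕜 E F).prod (C ∘L fst 𝕜 E F + D ∘L snd 𝕜 E F) ∘L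
    (WithLp.prodContinuousLinearEquiv 2 𝕜 E F).toContinuousLinearMap

@[simp]
lemma blockOp_toLp (A : E →L[𝕜] E') (B : F →L[𝕜] E') (C : E →L[𝕜] F') (D : F →L[𝕜] F')
    (x : E) (y : F) :
    blockOp A B C D (WithLp.toLp 2 (x, y)) = WithLp.toLp 2 (A x + B y, C x + D y) :=
  rfl

end blockOp

section isometry

variable {𝕜 E : Type*} [RCLike 𝕜] [NormedAddCommGroup E] [InnerProductSpace 𝕜 E]
  [CompleteSpace E] {V : E →L[𝕜] E}

lemma adjoint_apply_apply_of_adjoint_comp_self (hV : adjoint V ∘L V = 1) (x : E) :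
    adjoint V (V x) = x :=
  congr($hV x)

lemma adjoint_apply_sub_apply_adjoint_apply (hV : adjoint V ∘L V = 1) (y : E) :
    adjoint V (y - V (adjoint V y)) = 0 := by
  rw [map_sub, adjoint_apply_apply_of_adjoint_comp_self hV, sub_self]

lemma inner_apply_sub_apply_adjoint_apply (hV : adjoint V ∘L V = 1) (x y : E) :
    ⟪V x, y - V (adjoint V y)⟫_𝕜 = 0 := by
  rw [← adjoint_inner_right, adjoint_apply_sub_apply_adjoint_apply hV, inner_zero_right]

lemma norm_sq_sub_apply_adjoint_apply_add_norm_sq_adjoint_apply (hV : adjoint V ∘L V = 1)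
    (y : E) :
    ‖y - V (adjoint V y)‖ ^ 2 + ‖adjoint V y‖ ^ 2 = ‖y‖ ^ 2 := by
  have horth : ⟪y - V (adjoint V y), V (adjoint V y)⟫_𝕜 = 0 := by
    rw [← inner_conj_symm, inner_apply_sub_apply_adjoint_apply hV, map_zero]
  calc ‖y - V (adjoint V y)‖ ^ 2 + ‖adjoint V y‖ ^ 2
      = ‖y - V (adjoint V y)‖ ^ 2 + ‖V (adjoint V y)‖ ^ 2 := by
        rw [(norm_map_iff_adjoint_comp_self V).mpr hV]
    _ = ‖y - V (adjoint V y) + V (adjoint V y)‖ ^ 2 := by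
        rw [@norm_add_sq 𝕜, horth]; simp
    _ = ‖y‖ ^ 2 := by rw [sub_add_cancel]

variable (V) in
def unitaryDilation : WithLp 2 (E × E) →L[𝕜] WithLp 2 (E × E) :=
  blockOp V (1 - V ∘L adjoint V) 0 (adjoint V)

@[simp]
lemma unitaryDilation_toLp (x y : E) :
    unitaryDilation V (WithLp.toLp 2 (x, y)) =
      WithLp.toLp 2 (V x + (y - V (adjoint V y)), adjoint V y) := by
  simp [unitaryDilation]

lemma norm_unitaryDilation (hV : adjoint V ∘L V = 1) (z : WithLp 2 (E × E)) :
    ‖unitaryDilation V z‖ = ‖z‖ := by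
  obtain ⟨x, y⟩ := z
  have horth : ⟪V x, y - V (adjoint V y)⟫_𝕜 = 0 := inner_apply_sub_apply_adjoint_apply hV x y
  rw [← sq_eq_sq₀ (norm_nonneg _) (norm_nonneg _)]
  simp only [unitaryDilation_toLp, WithLp.prod_norm_sq_eq_of_L2, WithLp.toLp_fst, WithLp.toLp_snd]
  rw [@norm_add_sq 𝕜, horth, (norm_map_iff_adjoint_comp_self V).mpr hV, add_assoc,
    norm_sq_sub_apply_adjoint_apply_add_norm_sq_adjoint_apply hV]
  simp

lemma unitaryDilation_comp_blockOp (hV : adjoint V ∘L V = 1) :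
    unitaryDilation V ∘L blockOp (adjoint V) 0 (1 - V ∘L adjoint V) V = 1 := by
  ext ⟨x, y⟩
  simp [unitaryDilation, adjoint_apply_apply_of_adjoint_comp_self hV]

lemma surjective_unitaryDilation (hV : adjoint V ∘L V = 1) :
    Function.Surjective (unitaryDilation V) :=
  fun z => ⟨_, congr($(unitaryDilation_comp_blockOp hV) z)⟩

end isometry

end ContinuousLinearMap

end

/-- Every isometry `V` on a Hilbert space `H` extends to a unitary: there exist a Hilbert
space `K`, an isometric embedding `J : H → K` (identifying `H` with an invariant subspace),
and a unitary `U` on `K` with `U J = J V`. -/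
theorem stmt_13 {H : Type u} [NormedAddCommGroup H] [InnerProductSpace ℂ H] [CompleteSpace H]
    (V : H →L[ℂ] H) (hV : ∀ x : H, ‖V x‖ = ‖x‖) :
    ∃ (K : Type u) (_ : NormedAddCommGroup K) (_ : InnerProductSpace ℂ K)
      (_ : CompleteSpace K) (J : H →L[ℂ] K) (U : K →L[ℂ] K),
      (∀ x : H, ‖J x‖ = ‖x‖) ∧
      (∀ y : K, ‖U y‖ = ‖y‖) ∧ Function.Surjective U ∧
      U ∘L J = J ∘L V := by
  have hV' : adjoint V ∘L V = 1 := (norm_map_iff_adjoint_comp_self V).mp hV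
  let J : H →L[ℂ] WithLp 2 (H × H) :=
    (WithLp.prodContinuousLinearEquiv 2 ℂ H H).symm.toContinuousLinearMap ∘L inl ℂ H H
  refine ⟨WithLp 2 (H × H), inferInstance, inferInstance, inferInstance, J, unitaryDilation V,
    fun x => WithLp.norm_toLp_fst 2 H H x, norm_unitaryDilation hV',
    surjective_unitaryDilation hV', ?_⟩
  ext x
  simp [J]
end

section
/- Let V be an isometry on a Hilbert space H and let A be a bounded operator on H commuting with V. Then there exist a Hilbert space K, an isometric embedding J : H → K, a unitary U on K extending V (U J = J V), and a bounded operator B on K with ‖B‖ = ‖A‖, B J = J A, and B U = U B. -/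
open ContinuousLinearMap

universe u

/-!
The direct limit of `H →V H →V ⋯` is modelled by sequences `s : ℕ → H` with
`s (k + 1) = V (s k)` for all large `k`, the class of `V⁻ⁿ x` being any sequence with
`s (n + k) = Vᵏ x` eventually. Since `V` preserves inner products, `⟪s k, t k⟫` is eventually
constant, and its limit is a semi-inner product; `K` is the completion of this space. There `V`
becomes the left shift, which is invertible with the right shift as inverse, and `A` acts
pointwise, which commutes with the shift and does not increase norms.
-/

open Filter Topology UniformSpace
open scoped InnerProductSpace

noncomputable section

namespace ContinuousLinearMap

variable {𝕜 E F G : Type*} [NontriviallyNormedField 𝕜] [SeminormedAddCommGroup E]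
  [NormedSpace 𝕜 E] [SeminormedAddCommGroup F] [NormedSpace 𝕜 F] [SeminormedAddCommGroup G]
  [NormedSpace 𝕜 G]

theorem completion_comp (f : F →L[𝕜] G) (g : E →L[𝕜] F) :
    (f ∘L g).completion = f.completion ∘L g.completion := by
  ext y
  induction y using Completion.induction_on with
  | hp => exact isClosed_eq (map_continuous _) (map_continuous _)
  | ih x => simp

theorem completion_comp_toComplL (f : E →L[𝕜] F) :
    f.completion ∘L Completion.toComplL = Completion.toComplL ∘L f := by
  ext x
  simp

theorem rightInverse_completion {f : F →L[𝕜] E} {g : E →L[𝕜] F}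
    (h : Function.RightInverse g f) : Function.RightInverse g.completion f.completion := by
  intro y
  induction y using Completion.induction_on with
  | hp => exact isClosed_eq (by fun_prop) continuous_id
  | ih x => simp [h x]

theorem norm_completion_apply {f : E →L[𝕜] F} (hf : ∀ x, ‖f x‖ = ‖x‖) (y : Completion E) :
    ‖f.completion y‖ = ‖y‖ := by
  induction y using Completion.induction_on with
  | hp => exact isClosed_eq (by fun_prop) continuous_norm
  | ih x => simp [hf x]

theorem opNorm_completion_le (f : E →L[𝕜] F) : ‖f.completion‖ ≤ ‖f‖ := by
  refine opNorm_le_bound _ (norm_nonneg f) fun y => ?_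
  induction y using Completion.induction_on with
  | hp => exact isClosed_le (by fun_prop) (by fun_prop)
  | ih x => simpa using f.le_opNorm x

theorem opNorm_le_of_comp_eq {A : E →L[𝕜] E} {B : F →L[𝕜] F} {J : E →L[𝕜] F}
    (hJ : ∀ x, ‖J x‖ = ‖x‖) (h : B ∘L J = J ∘L A) : ‖A‖ ≤ ‖B‖ := by
  refine opNorm_le_bound _ (norm_nonneg B) fun x => ?_
  calc ‖A x‖ = ‖B (J x)‖ := by rw [← hJ, ← comp_apply B, h, comp_apply]
    _ ≤ ‖B‖ * ‖J x‖ := B.le_opNorm _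
    _ = ‖B‖ * ‖x‖ := by rw [hJ]

end ContinuousLinearMap

variable {𝕜 H : Type*} [RCLike 𝕜] [NormedAddCommGroup H] [InnerProductSpace 𝕜 H]

def eventualOrbits (V : H →ₗᵢ[𝕜] H) : Submodule 𝕜 (ℕ → H) where
  carrier := {s | ∀ᶠ k in atTop, s (k + 1) = V (s k)}
  add_mem' {s t} hs ht := by
    filter_upwards [hs, ht] with k hsk htk
    simp [hsk, htk]
  zero_mem' := by simp
  smul_mem' c s hs := by
    filter_upwards [hs] with k hk
    simp [hk]

/-- A type synonym, so that the product topology of `ℕ → H` does not compete with the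
seminorm put on it below. -/
def EventualOrbit (V : H →ₗᵢ[𝕜] H) : Type _ := eventualOrbits V

namespace EventualOrbit

variable {V : H →ₗᵢ[𝕜] H}

instance : AddCommGroup (EventualOrbit V) := inferInstanceAs (AddCommGroup (eventualOrbits V))

instance : Module 𝕜 (EventualOrbit V) := inferInstanceAs (Module 𝕜 (eventualOrbits V))

instance : CoeFun (EventualOrbit V) (fun _ => ℕ → H) :=
  ⟨fun s => (show eventualOrbits V from s).1⟩

@[simp]
theorem add_apply (s t : EventualOrbit V) (k : ℕ) : (s + t) k = s k + t k := rfl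

@[simp]
theorem smul_apply (c : 𝕜) (s : EventualOrbit V) (k : ℕ) : (c • s) k = c • s k := rfl

@[ext]
theorem ext {s t : EventualOrbit V} (h : ∀ k, s k = t k) : s = t :=
  Subtype.ext (funext h)

theorem eventually_apply_succ (s : EventualOrbit V) : ∀ᶠ k in atTop, s (k + 1) = V (s k) :=
  (show eventualOrbits V from s).2

theorem eventuallyConst_inner (s t : EventualOrbit V) :
    EventuallyConst (fun k => ⟪s k, t k⟫_𝕜) atTop := by
  rw [eventuallyConst_atTop_nat]
  obtain ⟨n, hn⟩ := eventually_atTop.1 (s.eventually_apply_succ.and t.eventually_apply_succ)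
  exact ⟨n, fun m hm => by simp only [(hn m hm).1, (hn m hm).2, V.inner_map_map]⟩

def innerLim (s t : EventualOrbit V) : 𝕜 := limUnder atTop fun k => ⟪s k, t k⟫_𝕜

theorem tendsto_innerLim (s t : EventualOrbit V) :
    Tendsto (fun k => ⟪s k, t k⟫_𝕜) atTop (𝓝 (innerLim s t)) := by
  obtain ⟨c, hc⟩ := (eventuallyConst_inner s t).exists_tendsto
  exact tendsto_nhds_limUnder ⟨c, hc.mono_right (pure_le_nhds c)⟩

theorem innerLim_eq_of_tendsto {s t : EventualOrbit V} {c : 𝕜}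
    (h : Tendsto (fun k => ⟪s k, t k⟫_𝕜) atTop (𝓝 c)) : innerLim s t = c :=
  tendsto_nhds_unique (tendsto_innerLim s t) h

abbrev preInnerProductCore : PreInnerProductSpace.Core 𝕜 (EventualOrbit V) where
  inner := innerLim
  conj_inner_symm s t := Eq.symm <| innerLim_eq_of_tendsto <| by
    simpa only [Function.comp_def, inner_conj_symm] using
      (RCLike.continuous_conj.tendsto _).comp (tendsto_innerLim t s)
  re_inner_nonneg s :=
    ge_of_tendsto ((RCLike.continuous_re.tendsto _).comp (tendsto_innerLim s s))
      (Eventually.of_forall fun _ => inner_self_nonneg)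
  add_left s t u := innerLim_eq_of_tendsto <| by
    simpa only [add_apply, inner_add_left] using (tendsto_innerLim s u).add (tendsto_innerLim t u)
  smul_left s t c := innerLim_eq_of_tendsto <| by
    simpa only [smul_apply, inner_smul_left] using
      (tendsto_innerLim s t).const_mul (starRingEnd 𝕜 c)

instance : SeminormedAddCommGroup (EventualOrbit V) :=
  InnerProductSpace.Core.toSeminormedAddCommGroup (c := preInnerProductCore)

instance : InnerProductSpace 𝕜 (EventualOrbit V) := InnerProductSpace.ofCore preInnerProductCore

theorem tendsto_norm (s : EventualOrbit V) : Tendsto (fun k => ‖s k‖) atTop (𝓝 ‖s‖) := by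
  simp only [norm_eq_sqrt_re_inner (𝕜 := 𝕜)]
  exact ((Real.continuous_sqrt.comp RCLike.continuous_re).tendsto _).comp (tendsto_innerLim s s)

theorem norm_eq_of_tendsto {s : EventualOrbit V} {c : ℝ}
    (h : Tendsto (fun k => ‖s k‖) atTop (𝓝 c)) : ‖s‖ = c :=
  tendsto_nhds_unique (tendsto_norm s) h

def shift : EventualOrbit V →ₗᵢ[𝕜] EventualOrbit V where
  toLinearMap := (LinearMap.funLeft 𝕜 H Nat.succ).restrict fun _ hs =>
    (tendsto_add_atTop_nat 1).eventually hs
  norm_map' s := norm_eq_of_tendsto ((tendsto_norm s).comp (tendsto_add_atTop_nat 1))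

@[simp]
theorem shift_apply (s : EventualOrbit V) (k : ℕ) : shift s k = s (k + 1) := rfl

def unshift : EventualOrbit V →ₗᵢ[𝕜] EventualOrbit V where
  toLinearMap := (LinearMap.funLeft 𝕜 H (· - 1)).restrict fun s hs => by
    filter_upwards [(tendsto_sub_atTop_nat 1).eventually hs, eventually_ge_atTop 1] with k hk hk1
    simpa [Nat.sub_add_cancel hk1] using hk
  norm_map' s := norm_eq_of_tendsto ((tendsto_norm s).comp (tendsto_sub_atTop_nat 1))

@[simp]
theorem unshift_apply (s : EventualOrbit V) (k : ℕ) : unshift s k = s (k - 1) := rfl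

theorem shift_unshift (s : EventualOrbit V) : shift (unshift s) = s := by
  ext k
  simp

theorem surjective_shift_completion :
    Function.Surjective (shift (V := V)).toContinuousLinearMap.completion :=
  (rightInverse_completion (f := (shift (V := V)).toContinuousLinearMap)
    (g := (unshift (V := V)).toContinuousLinearMap) shift_unshift).surjective

def compLeft (T : H →L[𝕜] H) (hT : Function.Commute T V) :
    EventualOrbit V →L[𝕜] EventualOrbit V :=
  LinearMap.mkContinuous ((LinearMap.compLeft T.toLinearMap ℕ).restrict fun s hs => by
      filter_upwards [hs] with k hk
      simp [LinearMap.compLeft, hk, hT (s k)])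
    ‖T‖ fun s => le_of_tendsto_of_tendsto' (tendsto_norm _) ((tendsto_norm s).const_mul ‖T‖)
      fun k => T.le_opNorm (s k)

@[simp]
theorem compLeft_apply (T : H →L[𝕜] H) (hT : Function.Commute T V) (s : EventualOrbit V)
    (k : ℕ) : compLeft T hT s k = T (s k) := rfl

theorem norm_compLeft_le (T : H →L[𝕜] H) (hT : Function.Commute T V) :
    ‖compLeft T hT‖ ≤ ‖T‖ :=
  LinearMap.mkContinuous_norm_le _ (norm_nonneg T) _

theorem compLeft_comp_shift (T : H →L[𝕜] H) (hT : Function.Commute T V) :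
    compLeft T hT ∘L shift.toContinuousLinearMap = shift.toContinuousLinearMap ∘L compLeft T hT :=
  rfl

variable (V) in
def orbit : H →ₗᵢ[𝕜] EventualOrbit V where
  toLinearMap := (LinearMap.pi fun k => (V ^ k).toLinearMap).codRestrict (eventualOrbits V)
    fun x => Eventually.of_forall fun k => by simp [pow_succ']
  norm_map' x := norm_eq_of_tendsto (tendsto_const_nhds.congr fun k => ((V ^ k).norm_map x).symm)

@[simp]
theorem orbit_apply (x : H) (k : ℕ) : orbit V x k = (V ^ k) x := rfl

theorem shift_comp_orbit :
    shift.toContinuousLinearMap ∘L (orbit V).toContinuousLinearMap =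
      (orbit V).toContinuousLinearMap ∘L V.toContinuousLinearMap := by
  ext x k
  simp [pow_succ]

theorem compLeft_comp_orbit (T : H →L[𝕜] H) (hT : Function.Commute T V) :
    compLeft T hT ∘L (orbit V).toContinuousLinearMap = (orbit V).toContinuousLinearMap ∘L T := by
  ext x k
  simpa [LinearIsometry.coe_pow] using hT.iterate_right k x

end EventualOrbit

end

open EventualOrbit in
theorem stmt_14_general {H : Type u} [NormedAddCommGroup H] [InnerProductSpace ℂ H]
    (V : H →L[ℂ] H) (hV : ∀ x : H, ‖V x‖ = ‖x‖)
    (A : H →L[ℂ] H) (hAV : A ∘L V = V ∘L A) :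
    ∃ (K : Type u) (_ : NormedAddCommGroup K) (_ : InnerProductSpace ℂ K)
      (_ : CompleteSpace K) (J : H →L[ℂ] K) (U : K →L[ℂ] K) (B : K →L[ℂ] K),
      (∀ x : H, ‖J x‖ = ‖x‖) ∧
      (∀ y : K, ‖U y‖ = ‖y‖) ∧ Function.Surjective U ∧
      U ∘L J = J ∘L V ∧
      ‖B‖ = ‖A‖ ∧ B ∘L J = J ∘L A ∧ B ∘L U = U ∘L B := by
  let W : H →ₗᵢ[ℂ] H := ⟨V, hV⟩
  have hA : Function.Commute A W := fun x => congr($hAV x)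
  let J := Completion.toComplL ∘L (orbit W).toContinuousLinearMap
  let U := (shift (V := W)).toContinuousLinearMap.completion
  let B := (compLeft A hA).completion
  have hJ (x : H) : ‖J x‖ = ‖x‖ := by simp [J]
  have hUJ : U ∘L J = J ∘L V := by
    rw [← comp_assoc, completion_comp_toComplL, comp_assoc, shift_comp_orbit, comp_assoc]
    rfl
  have hBJ : B ∘L J = J ∘L A := by
    rw [← comp_assoc, completion_comp_toComplL, comp_assoc, compLeft_comp_orbit, comp_assoc]
  have hBU : B ∘L U = U ∘L B := by
    rw [← completion_comp, ← completion_comp, compLeft_comp_shift]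
  have hB : ‖B‖ = ‖A‖ := le_antisymm ((opNorm_completion_le _).trans (norm_compLeft_le A hA))
    (opNorm_le_of_comp_eq hJ hBJ)
  exact ⟨Completion (EventualOrbit W), inferInstance, inferInstance, inferInstance, J, U, B, hJ,
    norm_completion_apply shift.norm_map, surjective_shift_completion, hUJ, hB, hBJ, hBU⟩

/-- If `V` is an isometry on `H` and `A` commutes with `V`, then there exist a Hilbert space
`K`, an isometric embedding `J : H → K`, a unitary `U` on `K` extending `V` (`U J = J V`),
and a bounded operator `B` on `K` with `‖B‖ = ‖A‖`, `B J = J A`, and `B U = U B`. -/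
theorem stmt_14 {H : Type u} [NormedAddCommGroup H] [InnerProductSpace ℂ H] [CompleteSpace H]
    (V : H →L[ℂ] H) (hV : ∀ x : H, ‖V x‖ = ‖x‖)
    (A : H →L[ℂ] H) (hAV : A ∘L V = V ∘L A) :
    ∃ (K : Type u) (_ : NormedAddCommGroup K) (_ : InnerProductSpace ℂ K)
      (_ : CompleteSpace K) (J : H →L[ℂ] K) (U : K →L[ℂ] K) (B : K →L[ℂ] K),
      (∀ x : H, ‖J x‖ = ‖x‖) ∧
      (∀ y : K, ‖U y‖ = ‖y‖) ∧ Function.Surjective U ∧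
      U ∘L J = J ∘L V ∧
      ‖B‖ = ‖A‖ ∧ B ∘L J = J ∘L A ∧ B ∘L U = U ∘L B :=
  stmt_14_general V hV A hAV
end

section
/- Let S be the unilateral shift on ℓ². There do not exist a unitary U on a Hilbert space H₀ and an isometric coextension W₂ of S such that W₁ = U ⊕ (I ⊗ S) (the direct sum of a unitary with the minimal isometric coextension of the zero operator on ℓ²) commutes with W₂ and W₂ is of the form (minimal isometric coextension of S) ⊕ (unitary). More precisely, in the setting A₁ = 0 and A₂ = S on H = ℓ², if W₁ = U ⊕ V_{A₁} with U unitary commutes with an isometric coextension W₂ of A₂ on the same space, then W₂ decomposes as X₀ ⊕ (S ⊗ I), which is not of the form V_{A₂} ⊕ (unitary). -/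
/-!
Let `u = (0, f(0,1))` and `ξ = J e₀ = (0, f(0,0))`. Since `V₁` shifts the second index,
`⟪u, W₁ w⟫ = ⟪ξ, w⟫`, and since `Ψ` conjugates `W₂` to `S ⊕ Y` with `Ψ ξ = (e₀, 0)`, `ξ` is
orthogonal to the range of `W₂`. Commutation then gives `⟪u, W₂ W₁ w⟫ = ⟪ξ, W₂ w⟫ = 0`, so `u` is
orthogonal to `W₂ (H₀ ⊕ 0) ⊆ W₂ (ran W₁)`. On the other summand, `W₂` extends `S` on `J H`, i.e.
maps `(0, f(m,0))` to `(0, f(m+1,0))`, and commuting with `W₁` propagates this to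
`W₂ (0, f(m,n)) = (0, f(m+1,n))`, which is orthogonal to `u`. Thus `u ⊥ ran W₂` and `u ⊥ ξ`;
but through `Ψ` the orthogonal complement of `ran W₂ = ran S ⊕ M` is spanned by `ξ`, so `u = 0`.
-/

open WithLp
open scoped InnerProductSpace

namespace HilbertBasis

variable {ι ι' 𝕜 E F : Type*} [RCLike 𝕜] [NormedAddCommGroup E] [InnerProductSpace 𝕜 E]
  [NormedAddCommGroup F] [InnerProductSpace 𝕜 F] (b : HilbertBasis ι 𝕜 E)

theorem ext_continuousLinearMap {G : Type*} [NormedAddCommGroup G] [NormedSpace 𝕜 G]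
    {T T' : E →L[𝕜] G} (h : ∀ i, T (b i) = T' (b i)) : T = T' :=
  ContinuousLinearMap.ext_on (Submodule.dense_iff_topologicalClosure_eq_top.mpr b.dense_span)
    (by rintro _ ⟨i, rfl⟩; exact h i)

theorem eq_zero_of_forall_inner_eq_zero {x : E} (h : ∀ i, ⟪b i, x⟫_𝕜 = 0) : x = 0 :=
  b.repr.map_eq_zero_iff.mp <| lp.ext <| funext fun i => by simp [b.repr_apply_apply, h]

variable {c : ι' → F} {T : E →L[𝕜] F} {σ : ι → ι'}

theorem inner_apply_eq_zero_of_notMem_range (hc : Orthonormal 𝕜 c)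
    (hT : ∀ i, T (b i) = c (σ i)) {j : ι'} (hj : j ∉ Set.range σ) (x : E) :
    ⟪c j, T x⟫_𝕜 = 0 := by
  have : (innerSL 𝕜 (c j)).comp T = 0 :=
    b.ext_continuousLinearMap fun i => by
      simpa [hT] using hc.inner_eq_zero fun h => hj ⟨i, h.symm⟩
  simpa using DFunLike.congr_fun this x

theorem inner_apply_of_injective (hc : Orthonormal 𝕜 c) (hT : ∀ i, T (b i) = c (σ i))
    (hσ : σ.Injective) (i : ι) (x : E) : ⟪c (σ i), T x⟫_𝕜 = ⟪b i, x⟫_𝕜 := by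
  have : (innerSL 𝕜 (c (σ i))).comp T = innerSL 𝕜 (b i) :=
    b.ext_continuousLinearMap fun k => by
      classical
      simpa [hT, orthonormal_iff_ite.mp b.orthonormal] using
        orthonormal_iff_ite.mp (hc.comp σ hσ) i k
  simpa using DFunLike.congr_fun this x

theorem inner_zero_shift_apply (e : HilbertBasis ℕ 𝕜 E) {S : E →L[𝕜] E}
    (hS : ∀ n, S (e n) = e (n + 1)) (x : E) : ⟪e 0, S x⟫_𝕜 = 0 :=
  e.inner_apply_eq_zero_of_notMem_range e.orthonormal hS (by simp) x

end HilbertBasis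

theorem Orthonormal.toLp_zero_prod {ι 𝕜 E F : Type*} [RCLike 𝕜] [NormedAddCommGroup E]
    [InnerProductSpace 𝕜 E] [NormedAddCommGroup F] [InnerProductSpace 𝕜 F] {v : ι → F}
    (hv : Orthonormal 𝕜 v) : Orthonormal 𝕜 fun i => toLp 2 ((0 : E), v i) := by
  classical
  rw [orthonormal_iff_ite] at hv ⊢
  simpa using hv

theorem Function.Commute.apply_grid {α : Type*} {f g : α → α} (hfg : Function.Commute f g)
    {x : ℕ → ℕ → α} (hf : ∀ m n, f (x m n) = x m (n + 1)) (hg : ∀ m, g (x m 0) = x (m + 1) 0)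
    (m n : ℕ) : g (x m n) = x (m + 1) n := by
  induction n with
  | zero => exact hg m
  | succ n ih => rw [← hf, ← hfg, ih, hf]

section ConjugateToDirectSum

variable {𝕜 H M K : Type*} [RCLike 𝕜] [NormedAddCommGroup H] [InnerProductSpace 𝕜 H]
  [NormedAddCommGroup M] [InnerProductSpace 𝕜 M] [NormedAddCommGroup K] [InnerProductSpace 𝕜 K]
  {S : H →L[𝕜] H} {Y : M →L[𝕜] M} {W : K → K} {Ψ : K ≃ₗᵢ[𝕜] WithLp 2 (H × M)}

theorem inner_apply_eq_of_conj (hΨW : ∀ h m, Ψ (W (Ψ.symm (toLp 2 (h, m)))) = toLp 2 (S h, Y m))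
    (z w : K) : ⟪z, W w⟫_𝕜 = ⟪(Ψ z).fst, S (Ψ w).fst⟫_𝕜 + ⟪(Ψ z).snd, Y (Ψ w).snd⟫_𝕜 := by
  have hw : Ψ.symm (toLp 2 ((Ψ w).fst, (Ψ w).snd)) = w := Ψ.symm_apply_apply w
  rw [← Ψ.inner_map_map, ← hw, hΨW, Ψ.apply_symm_apply, prod_inner_apply]
  rfl

theorem apply_symm_toLp_zero_of_conj
    (hΨW : ∀ h m, Ψ (W (Ψ.symm (toLp 2 (h, m)))) = toLp 2 (S h, Y m)) (h : H) :
    W (Ψ.symm (toLp 2 (h, 0))) = Ψ.symm (toLp 2 (S h, 0)) := by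
  apply Ψ.injective
  rw [hΨW, map_zero, Ψ.apply_symm_apply]

theorem inner_symm_toLp_basis_zero_apply_eq_zero (e : HilbertBasis ℕ 𝕜 H)
    (hS : ∀ n, S (e n) = e (n + 1))
    (hΨW : ∀ h m, Ψ (W (Ψ.symm (toLp 2 (h, m)))) = toLp 2 (S h, Y m)) (z : K) :
    ⟪Ψ.symm (toLp 2 (e 0, 0)), W z⟫_𝕜 = 0 := by
  simp [inner_apply_eq_of_conj hΨW, e.inner_zero_shift_apply hS]

theorem eq_zero_of_orthogonal_conj_shift (e : HilbertBasis ℕ 𝕜 H)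
    (hS : ∀ n, S (e n) = e (n + 1)) (hY : Function.Surjective Y)
    (hΨW : ∀ h m, Ψ (W (Ψ.symm (toLp 2 (h, m)))) = toLp 2 (S h, Y m)) {u : K}
    (hue : ⟪u, Ψ.symm (toLp 2 (e 0, 0))⟫_𝕜 = 0) (huW : ∀ z, ⟪u, W z⟫_𝕜 = 0) : u = 0 := by
  have hq : (Ψ u).snd = 0 := by
    obtain ⟨m, hm⟩ := hY (Ψ u).snd
    simpa [inner_apply_eq_of_conj hΨW, hm] using huW (Ψ.symm (toLp 2 (0, m)))
  have hp : (Ψ u).fst = 0 := by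
    refine e.eq_zero_of_forall_inner_eq_zero fun n => inner_eq_zero_symm.mp ?_
    cases n with
    | zero => simpa [← Ψ.inner_map_map u, hq] using hue
    | succ n => simpa [inner_apply_eq_of_conj hΨW, hS] using huW (Ψ.symm (toLp 2 (e n, 0)))
  have hΨu : Ψ u = toLp 2 ((Ψ u).fst, (Ψ u).snd) := rfl
  rw [hp, hq] at hΨu
  exact Ψ.map_eq_zero_iff.mp hΨu

end ConjugateToDirectSum

theorem inner_apply_eq_zero_of_commute {𝕜 H₀ HT : Type*} [RCLike 𝕜] [NormedAddCommGroup H₀]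
    [InnerProductSpace 𝕜 H₀] [NormedAddCommGroup HT] [InnerProductSpace 𝕜 HT]
    {W₁ : WithLp 2 (H₀ × HT) → WithLp 2 (H₀ × HT)}
    {W₂ : WithLp 2 (H₀ × HT) →L[𝕜] WithLp 2 (H₀ × HT)}
    (hcomm : Function.Commute W₁ W₂) (hW₁ : ∀ a, ∃ w, W₁ w = toLp 2 (a, 0))
    {u ξ : WithLp 2 (H₀ × HT)} (huξ : ∀ w, ⟪u, W₁ w⟫_𝕜 = ⟪ξ, w⟫_𝕜)
    (hξ : ∀ w, ⟪ξ, W₂ w⟫_𝕜 = 0) (hu : ∀ b, ⟪u, W₂ (toLp 2 (0, b))⟫_𝕜 = 0)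
    (z : WithLp 2 (H₀ × HT)) : ⟪u, W₂ z⟫_𝕜 = 0 := by
  obtain ⟨w, hw⟩ := hW₁ z.fst
  have hz : z = W₁ w + toLp 2 (0, z.snd) := by
    rw [hw, ← toLp_add, Prod.mk_add_mk, add_zero, zero_add]
    rfl
  rw [hz, map_add, inner_add_right, ← hcomm w, huξ, hξ, hu, add_zero]

theorem stmt_19_general {H H₀ HT M : Type*}
    [NormedAddCommGroup H] [InnerProductSpace ℂ H]
    [NormedAddCommGroup H₀] [InnerProductSpace ℂ H₀]
    [NormedAddCommGroup HT] [InnerProductSpace ℂ HT]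
    [NormedAddCommGroup M] [InnerProductSpace ℂ M]
    (e : HilbertBasis ℕ ℂ H) (S : H →L[ℂ] H) (hS : ∀ n : ℕ, S (e n) = e (n + 1))
    (U : H₀ →L[ℂ] H₀) (hUsurj : Function.Surjective U)
    (f : HilbertBasis (ℕ × ℕ) ℂ HT) (V₁ : HT →L[ℂ] HT)
    (hV₁ : ∀ m n : ℕ, V₁ (f (m, n)) = f (m, n + 1))
    (g : H →L[ℂ] HT) (hg : ∀ m : ℕ, g (e m) = f (m, 0))
    (W₁ W₂ : WithLp 2 (H₀ × HT) →L[ℂ] WithLp 2 (H₀ × HT))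
    (hW₁ : ∀ (a : H₀) (b : HT), W₁ ((WithLp.equiv 2 (H₀ × HT)).symm (a, b)) =
      (WithLp.equiv 2 (H₀ × HT)).symm (U a, V₁ b))
    (hcomm : W₁ ∘L W₂ = W₂ ∘L W₁)
    (J : H →L[ℂ] WithLp 2 (H₀ × HT))
    (hJ : ∀ h : H, J h = (WithLp.equiv 2 (H₀ × HT)).symm (0, g h))
    (Y : M →L[ℂ] M) (hYsurj : Function.Surjective Y)
    (Ψ : WithLp 2 (H₀ × HT) ≃ₗᵢ[ℂ] WithLp 2 (H × M))
    (hΨJ : ∀ h : H, Ψ (J h) = (WithLp.equiv 2 (H × M)).symm (h, 0))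
    (hΨW : ∀ (h : H) (m : M),
      Ψ (W₂ (Ψ.symm ((WithLp.equiv 2 (H × M)).symm (h, m)))) =
        (WithLp.equiv 2 (H × M)).symm (S h, Y m)) :
    False := by
  simp only [WithLp.equiv_symm_apply] at hW₁ hJ hΨJ hΨW
  have hJΨ : ∀ h, J h = Ψ.symm (toLp 2 (h, 0)) := fun h => by rw [← hΨJ, Ψ.symm_apply_apply]
  have hJe : ∀ m, J (e m) = toLp 2 (0, f (m, 0)) := fun m => by rw [hJ, hg]
  have hW₂f : ∀ m n, W₂ (toLp 2 (0, f (m, n))) = toLp 2 (0, f (m + 1, n)) :=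
    Function.Commute.apply_grid (fun z => DFunLike.congr_fun hcomm z)
      (x := fun m n => toLp 2 (0, f (m, n))) (fun m n => by simp [hW₁, hV₁])
      (fun m => by rw [← hJe, ← hJe, hJΨ, hJΨ, apply_symm_toLp_zero_of_conj hΨW, hS])
  have hu_W₁ : ∀ w, ⟪toLp 2 (0, f (0, 1)), W₁ w⟫_ℂ = ⟪J (e 0), w⟫_ℂ := fun w => by
    rw [show w = toLp 2 (w.fst, w.snd) from rfl, hW₁, hJe]
    simpa using f.inner_apply_of_injective f.orthonormal (σ := Prod.map id (· + 1))
      (fun i => hV₁ i.1 i.2) (Function.injective_id.prodMap (add_left_injective 1)) (0, 0) w.snd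
  have hu_HT : ∀ b, ⟪toLp 2 (0, f (0, 1)), W₂ (toLp 2 (0, b))⟫_ℂ = 0 :=
    f.inner_apply_eq_zero_of_notMem_range f.orthonormal.toLp_zero_prod (σ := Prod.map (· + 1) id)
      (T := W₂ ∘L (WithLp.prodContinuousLinearEquiv 2 ℂ H₀ HT).symm.toContinuousLinearMap ∘L
        ContinuousLinearMap.inr ℂ H₀ HT) (fun i => hW₂f i.1 i.2) (by simp)
  have hξ : ∀ z, ⟪J (e 0), W₂ z⟫_ℂ = 0 := by
    simpa [← hJΨ] using inner_symm_toLp_basis_zero_apply_eq_zero e hS hΨW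
  have hW₁_range : ∀ a, ∃ w, W₁ w = toLp 2 (a, 0) := fun a => by
    obtain ⟨a', rfl⟩ := hUsurj a
    exact ⟨toLp 2 (a', 0), by simp [hW₁]⟩
  have hu : toLp 2 (0, f (0, 1)) = (0 : WithLp 2 (H₀ × HT)) := by
    refine eq_zero_of_orthogonal_conj_shift e hS hYsurj hΨW ?_ ?_
    · simp [← hJΨ, hJe, orthonormal_iff_ite.mp f.orthonormal]
    · exact inner_apply_eq_zero_of_commute (fun z => DFunLike.congr_fun hcomm z) hW₁_range
        hu_W₁ hξ hu_HT
  exact f.orthonormal.ne_zero (0, 1) (congrArg WithLp.snd hu)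

/-- Shalit's example: for `A₁ = 0` and `A₂ = S` (the unilateral shift on `ℓ²`), there is no
commuting pair of isometric coextensions with `W₁ = U ⊕ V_{A₁}` (`U` unitary,
`V_{A₁} = I ⊗ S` the minimal isometric coextension of `0`) and `W₂` of the form
`V_{A₂} ⊕ (unitary) = S ⊕ (unitary)`.  Here `H` carries an orthonormal basis `e : ℕ → H`
with `S eₙ = e_{n+1}`, `HT` carries an orthonormal basis `f : ℕ × ℕ → HT` with
`V₁ f(m,n) = f(m,n+1)`, the copy of `H` inside `H₀ ⊕ HT` is `h ↦ (0, g h)` with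
`g eₘ = f(m,0)`, and "`W₂` is of the form `S ⊕ unitary`" is witnessed by a unitary
`Ψ : H₀ ⊕ HT ≃ H ⊕ M` carrying the copy of `H` to the first coordinate and conjugating
`W₂` to `S ⊕ Y` with `Y` unitary.  These conditions are contradictory. -/
theorem stmt_19 {H H₀ HT M : Type*}
    [NormedAddCommGroup H] [InnerProductSpace ℂ H] [CompleteSpace H]
    [NormedAddCommGroup H₀] [InnerProductSpace ℂ H₀] [CompleteSpace H₀]
    [NormedAddCommGroup HT] [InnerProductSpace ℂ HT] [CompleteSpace HT]
    [NormedAddCommGroup M] [InnerProductSpace ℂ M] [CompleteSpace M]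
    (e : HilbertBasis ℕ ℂ H) (S : H →L[ℂ] H) (hS : ∀ n : ℕ, S (e n) = e (n + 1))
    (U : H₀ →L[ℂ] H₀) (hUiso : ∀ x, ‖U x‖ = ‖x‖) (hUsurj : Function.Surjective U)
    (f : HilbertBasis (ℕ × ℕ) ℂ HT) (V₁ : HT →L[ℂ] HT)
    (hV₁ : ∀ m n : ℕ, V₁ (f (m, n)) = f (m, n + 1))
    (g : H →L[ℂ] HT) (hg : ∀ m : ℕ, g (e m) = f (m, 0))
    (W₁ W₂ : WithLp 2 (H₀ × HT) →L[ℂ] WithLp 2 (H₀ × HT))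
    (hW₁ : ∀ (a : H₀) (b : HT), W₁ ((WithLp.equiv 2 (H₀ × HT)).symm (a, b)) =
      (WithLp.equiv 2 (H₀ × HT)).symm (U a, V₁ b))
    (hW₂iso : ∀ z, ‖W₂ z‖ = ‖z‖)
    (hcomm : W₁ ∘L W₂ = W₂ ∘L W₁)
    (J : H →L[ℂ] WithLp 2 (H₀ × HT))
    (hJ : ∀ h : H, J h = (WithLp.equiv 2 (H₀ × HT)).symm (0, g h))
    (hcoext : ContinuousLinearMap.adjoint W₂ ∘L J = J ∘L ContinuousLinearMap.adjoint S)
    (Y : M →L[ℂ] M) (hYiso : ∀ m, ‖Y m‖ = ‖m‖) (hYsurj : Function.Surjective Y)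
    (Ψ : WithLp 2 (H₀ × HT) ≃ₗᵢ[ℂ] WithLp 2 (H × M))
    (hΨJ : ∀ h : H, Ψ (J h) = (WithLp.equiv 2 (H × M)).symm (h, 0))
    (hΨW : ∀ (h : H) (m : M),
      Ψ (W₂ (Ψ.symm ((WithLp.equiv 2 (H × M)).symm (h, m)))) =
        (WithLp.equiv 2 (H × M)).symm (S h, Y m)) :
    False :=
  stmt_19_general e S hS U hUsurj f V₁ hV₁ g hg W₁ W₂ hW₁ hcomm J hJ Y hYsurj Ψ hΨJ hΨW
end
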